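/- arXiv:1410.5619 — 5 statements merged into one kernel-verified Lean document; each statement's English description precedes it below -/
import Mathlib

section
/- Let Y ⊆ V be a rigid subset, let A ⊆ Y be an almost filling subset, and suppose the vertex β ∈ V is uniquely determined by A. Then Y ∪ {β} is rigid. (This is Lemma 3.2 of the paper, stated in the abstract setting of a group acting by graph automorphisms, which captures every property of the curve complex and mapping class group that the paper's proof uses.) -/
/-- A map `φ` is simplicial on `Y ⊆ V` (with respect to the simple graph `X`):
it sends adjacent vertices of `Y` to adjacent vertices. -/
def Simplicial {V : Type*} (X : SimpleGraph V) (Y : Set V) (φ : V → V) : Prop :=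
  ∀ y ∈ Y, ∀ z ∈ Y, X.Adj y z → X.Adj (φ y) (φ z)

/-- The closed star of `y` in `Y`: the set `{y} ∪ {z ∈ Y : z adjacent to y}` (for `y ∈ Y`). -/
def ClosedStar {V : Type*} (X : SimpleGraph V) (Y : Set V) (y : V) : Set V :=
  {z ∈ Y | z = y ∨ X.Adj y z}

/-- A map `φ` is locally injective on `Y`: for every `y ∈ Y` the restriction of `φ`
to the closed star of `y` in `Y` is injective. -/
def LocallyInjective {V : Type*} (X : SimpleGraph V) (Y : Set V) (φ : V → V) : Prop :=
  ∀ y ∈ Y, Set.InjOn φ (ClosedStar X Y y)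

/-- `Y` is rigid: every locally injective simplicial map on `Y` is the restriction of the
action of some element of `G`. -/
def Rigid {V : Type*} (G : Type*) [Group G] [MulAction G V] (X : SimpleGraph V)
    (Y : Set V) : Prop :=
  ∀ φ : V → V, Simplicial X Y φ → LocallyInjective X Y φ → ∃ g : G, ∀ y ∈ Y, φ y = g • y

/-- `A` is almost filling: the set of vertices outside `A` adjacent to every element
of `A` is finite. -/
def AlmostFilling {V : Type*} (X : SimpleGraph V) (A : Set V) : Prop :=
  {β : V | β ∉ A ∧ ∀ α ∈ A, X.Adj β α}.Finite

/-- `β` is uniquely determined by `A`: `A` is almost filling and `β` is the unique vertex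
outside `A` adjacent to every element of `A`. -/
def UniquelyDetermined {V : Type*} (X : SimpleGraph V) (A : Set V) (β : V) : Prop :=
  AlmostFilling X A ∧ {γ : V | γ ∉ A ∧ ∀ α ∈ A, X.Adj γ α} = {β}

/-- Lemma 3.2: if `Y` is rigid, `A ⊆ Y` is almost filling, and `β` is uniquely determined
by `A`, then `Y ∪ {β}` is rigid. -/
theorem rigid_union_uniquelyDetermined {V G : Type*} [Group G] [MulAction G V]
    (X : SimpleGraph V)
    (hAct : ∀ (g : G) (a b : V), X.Adj (g • a) (g • b) ↔ X.Adj a b)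
    (Y : Set V) (hY : Rigid G X Y)
    (A : Set V) (hAY : A ⊆ Y) (hAF : AlmostFilling X A)
    (β : V) (hβ : UniquelyDetermined X A β) :
    Rigid G X (Y ∪ {β}) := by
  intro φ hS hL
  obtain ⟨g, hg⟩ := hY φ
    (fun y hy z hz h => hS y (Or.inl hy) z (Or.inl hz) h)
    (fun y hy => Set.InjOn.mono
      (show ClosedStar X Y y ⊆ ClosedStar X (Y ∪ {β}) y from
        fun z hz => ⟨Or.inl hz.1, hz.2⟩)
      (hL y (Or.inl hy)))
  refine ⟨g, ?_⟩
  rintro y (hy | rfl)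
  · exact hg y hy
  by_cases hβY : y ∈ Y
  · exact hg y hβY
  have hβprop : y ∉ A ∧ ∀ α ∈ A, X.Adj y α := by
    have : y ∈ ({y} : Set V) := rfl
    rw [← hβ.2] at this
    exact this
  have hadj : ∀ α ∈ A, X.Adj (g⁻¹ • φ y) α := by
    intro α hα
    have h1 : X.Adj (φ y) (φ α) :=
      hS y (Or.inr rfl) α (Or.inl (hAY hα)) (hβprop.2 α hα)
    rw [hg α (hAY hα)] at h1
    rw [← inv_smul_smul g α]
    exact (hAct g⁻¹ _ _).mpr h1
  have hmem : g⁻¹ • φ y ∈ {γ : V | γ ∉ A ∧ ∀ α ∈ A, X.Adj γ α} := by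
    refine ⟨fun hin => X.irrefl (hadj _ hin), hadj⟩
  rw [hβ.2] at hmem
  have : g⁻¹ • φ y = y := hmem
  exact inv_smul_eq_iff.mp this
end

section
/- If Y ⊆ V is a rigid subset, then Y^r is rigid for every r ≥ 0. (This is Proposition 3.3 of the paper, stated in the abstract setting of a group acting by graph automorphisms, which captures every property of the curve complex and mapping class group that the paper's proof uses.) -/
/-- The set `Y' = Y ∪ {β : β is uniquely determined by some almost filling A ⊆ Y}`. -/
def primeSet {V : Type*} (X : SimpleGraph V) (Y : Set V) : Set V :=
  Y ∪ {β : V | ∃ A : Set V, A ⊆ Y ∧ UniquelyDetermined X A β}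

/-- The iterated sets `Y⁰ = Y`, `Y^r = (Y^{r-1})'`. -/
def iteratedPrime {V : Type*} (X : SimpleGraph V) (Y : Set V) : ℕ → Set V
  | 0 => Y
  | r + 1 => primeSet X (iteratedPrime X Y r)


theorem closedStar_mono {V : Type*} (X : SimpleGraph V) {Y Z : Set V} (h : Y ⊆ Z) (y : V) :
    ClosedStar X Y y ⊆ ClosedStar X Z y := by
  intro z hz
  exact ⟨h hz.1, hz.2⟩

theorem rigid_primeSet {V G : Type*} [Group G] [MulAction G V]
    (X : SimpleGraph V)
    (hAct : ∀ (g : G) (a b : V), X.Adj (g • a) (g • b) ↔ X.Adj a b)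
    (Y : Set V) (hY : Rigid G X Y) : Rigid G X (primeSet X Y) := by
  intro φ hs hl
  have hsub : Y ⊆ primeSet X Y := Set.subset_union_left
  obtain ⟨g, hg⟩ := hY φ
    (fun y hy z hz h => hs y (hsub hy) z (hsub hz) h)
    (fun y hy => (hl y (hsub hy)).mono (closedStar_mono X hsub y))
  refine ⟨g, ?_⟩
  set ψ : V → V := fun v => g⁻¹ • φ v with hψ
  have hψY : ∀ y ∈ Y, ψ y = y := by
    intro y hy
    simp [hψ, hg y hy]
  have hψs : Simplicial X (primeSet X Y) ψ := by
    intro y hy z hz h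
    exact (hAct g⁻¹ (φ y) (φ z)).mpr (hs y hy z hz h)
  have hψl : LocallyInjective X (primeSet X Y) ψ := by
    intro y hy a ha b hb h
    exact hl y hy ha hb (smul_left_cancel g⁻¹ h)
  have key : ∀ β ∈ primeSet X Y, ψ β = β := by
    intro β hβ
    rcases hβ with hβY | ⟨A, hA, hAF, hBset⟩
    · exact hψY β hβY
    · have hβprop : β ∉ A ∧ ∀ α ∈ A, X.Adj β α :=
        (Set.ext_iff.mp hBset β).mpr rfl
      have hβ' : β ∈ primeSet X Y := Or.inr ⟨A, hA, hAF, hBset⟩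
      have hmem : ψ β ∈ {γ : V | γ ∉ A ∧ ∀ α ∈ A, X.Adj γ α} := by
        constructor
        · intro hin
          have hα₀Y : ψ β ∈ Y := hA hin
          have hadj : X.Adj (ψ β) β := (hβprop.2 (ψ β) hin).symm
          have hstar1 : β ∈ ClosedStar X (primeSet X Y) (ψ β) :=
            ⟨hβ', Or.inr hadj⟩
          have hstar2 : ψ β ∈ ClosedStar X (primeSet X Y) (ψ β) :=
            ⟨hsub hα₀Y, Or.inl rfl⟩
          have : β = ψ β := by
            apply hψl (ψ β) (hsub hα₀Y) hstar1 hstar2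
            rw [hψY (ψ β) hα₀Y]
          exact hβprop.1 (this ▸ hin)
        · intro α hα
          have := hψs β hβ' α (hsub (hA hα)) (hβprop.2 α hα)
          rwa [hψY α (hA hα)] at this
      have : ψ β = β := (Set.ext_iff.mp hBset (ψ β)).mp hmem
      exact this
  intro β hβ
  have := key β hβ
  have : g • ψ β = g • β := by rw [this]
  simpa [hψ] using this

/-- Proposition 3.3: if `Y` is rigid then so is `Y^r` for every `r ≥ 0`. -/
theorem rigid_iteratedPrime {V G : Type*} [Group G] [MulAction G V]
    (X : SimpleGraph V)
    (hAct : ∀ (g : G) (a b : V), X.Adj (g • a) (g • b) ↔ X.Adj a b)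
    (Y : Set V) (hY : Rigid G X Y) :
    ∀ r : ℕ, Rigid G X (iteratedPrime X Y r) := by
  intro r
  induction r with
  | zero => exact hY
  | succ r ih => exact rigid_primeSet X hAct _ ih
end

section
/- Let Y₁, Y₂ ⊆ V be rigid subsets. If Y₁ ∩ Y₂ is weakly rigid, then Y₁ ∪ Y₂ is rigid. (This is Lemma 3.4 of the paper, stated in the abstract setting of a group acting by graph automorphisms, which captures every property of the curve complex and mapping class group that the paper's proof uses.) -/
/-- `Y` is weakly rigid: the only element of `G` fixing `Y` pointwise is the identity. -/
def WeaklyRigid {V : Type*} (G : Type*) [Group G] [MulAction G V] (Y : Set V) : Prop :=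
  ∀ g : G, (∀ y ∈ Y, g • y = y) → g = 1

/-- Lemma 3.4: if `Y₁, Y₂` are rigid and `Y₁ ∩ Y₂` is weakly rigid,
then `Y₁ ∪ Y₂` is rigid. -/
theorem rigid_union_of_weaklyRigid_inter {V G : Type*} [Group G] [MulAction G V]
    (X : SimpleGraph V)
    (hAct : ∀ (g : G) (a b : V), X.Adj (g • a) (g • b) ↔ X.Adj a b)
    (Y₁ Y₂ : Set V) (hY₁ : Rigid G X Y₁) (hY₂ : Rigid G X Y₂)
    (hInter : WeaklyRigid G (Y₁ ∩ Y₂)) :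
    Rigid G X (Y₁ ∪ Y₂) := by
  intro φ hs hl
  have hs1 : Simplicial X Y₁ φ := fun y hy z hz h =>
    hs y (Or.inl hy) z (Or.inl hz) h
  have hs2 : Simplicial X Y₂ φ := fun y hy z hz h =>
    hs y (Or.inr hy) z (Or.inr hz) h
  have hl1 : LocallyInjective X Y₁ φ := fun y hy => by
    refine (hl y (Or.inl hy)).mono ?_
    rintro z ⟨hz1, hz2⟩; exact ⟨Or.inl hz1, hz2⟩
  have hl2 : LocallyInjective X Y₂ φ := fun y hy => by
    refine (hl y (Or.inr hy)).mono ?_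
    rintro z ⟨hz1, hz2⟩; exact ⟨Or.inr hz1, hz2⟩
  obtain ⟨g₁, hg₁⟩ := hY₁ φ hs1 hl1
  obtain ⟨g₂, hg₂⟩ := hY₂ φ hs2 hl2
  have : g₂⁻¹ * g₁ = 1 := by
    apply hInter
    rintro y ⟨h1, h2⟩
    rw [mul_smul, ← hg₁ y h1, hg₂ y h2, inv_smul_smul]
  have hg : g₁ = g₂ := by
    have := congrArg (g₂ * ·) this
    simpa [mul_assoc] using this
  refine ⟨g₁, ?_⟩
  rintro y (hy | hy)
  · exact hg₁ y hy
  · rw [hg]; exact hg₂ y hy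
end

section
/- Suppose Y₁ ⊆ Y₂ ⊆ Y₃ ⊆ ⋯ is an increasing sequence of subsets of V such that each Yᵢ is rigid and weakly rigid, and ⋃_{i ≥ 1} Yᵢ = V. Then for every locally injective simplicial map φ : V → V there exists a unique g ∈ G with φ(v) = g • v for all v ∈ V. (This is the argument proving Corollary 1.2 of the paper, stated in the abstract setting of a group acting by graph automorphisms, which captures every property of the curve complex and mapping class group that the paper's proof uses.) -/
/-- Corollary 1.2 (abstract form): given an exhaustion of `V` by rigid, weakly rigid sets,
every locally injective simplicial self-map of the whole graph is induced by a unique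
element of `G`. -/
theorem simplicial_rigidity_of_exhaustion {V G : Type*} [Group G] [MulAction G V]
    (X : SimpleGraph V)
    (hAct : ∀ (g : G) (a b : V), X.Adj (g • a) (g • b) ↔ X.Adj a b)
    (Ys : ℕ → Set V) (hMono : ∀ i : ℕ, Ys i ⊆ Ys (i + 1))
    (hRigid : ∀ i : ℕ, Rigid G X (Ys i))
    (hWR : ∀ i : ℕ, WeaklyRigid G (Ys i))
    (hUnion : (⋃ i : ℕ, Ys i) = Set.univ) :
    ∀ φ : V → V, Simplicial X Set.univ φ → LocallyInjective X Set.univ φ →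
      ∃! g : G, ∀ v : V, φ v = g • v := by
  intro φ hS hL
  -- restrict to each Yᵢ
  have hsub : ∀ i, ∃ g : G, ∀ y ∈ Ys i, φ y = g • y := by
    intro i
    refine hRigid i φ (fun y _ z _ h => hS y trivial z trivial h) ?_
    intro y hy a ha b hb hab
    exact hL y trivial ⟨trivial, ha.2⟩ ⟨trivial, hb.2⟩ hab
  choose g hg using hsub
  have hconst : ∀ i, g i = g 0 := by
    intro i
    induction i with
    | zero => rfl
    | succ n ih =>
      have : (g n)⁻¹ * g (n + 1) = 1 := by
        apply hWR n
        intro y hy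
        have h1 := hg n y hy
        have h2 := hg (n + 1) y (hMono n hy)
        rw [mul_smul, ← h2, h1, inv_smul_smul]
      have : g (n + 1) = g n := by
        have := mul_eq_one_iff_inv_eq.mp this
        simpa using this.symm
      rw [this, ih]
  refine ⟨g 0, ?_, ?_⟩
  · intro v
    have hv : v ∈ ⋃ i, Ys i := hUnion ▸ Set.mem_univ v
    obtain ⟨i, hi⟩ := Set.mem_iUnion.mp hv
    rw [hg i v hi, hconst i]
  · intro h hh
    have : (g 0)⁻¹ * h = 1 := by
      apply hWR 0
      intro y hy
      rw [mul_smul, ← hh y, hg 0 y hy, inv_smul_smul]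
    have := mul_eq_one_iff_inv_eq.mp this
    simpa using this.symm
end

section
/- Let D be a finite nonempty set of triangles of the Farey graph F such that the subgraph of the dual graph T induced on D is connected. Then the union of the vertices of the triangles in D, i.e. ⋃_{Δ ∈ D} Δ ⊆ ℙ¹(ℚ), is rigid: every locally injective simplicial map from this set into ℙ¹(ℚ) coincides with the action of some element of GL(2,ℤ). (This is the paper's claim that every subcomplex of the Farey complex homeomorphic to a disk is rigid, used in the proof of the main theorem for S₀,₄ and S₁,₁.) -/
/-- The projective line over `ℚ`. -/
abbrev P1Q := Projectivization ℚ (Fin 2 → ℚ)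

/-- The point of `ℙ¹(ℚ)` with homogeneous integer coordinates `[a : b]`
(a junk value is returned when `a = b = 0`, which never occurs for primitive vectors). -/
def fareyMk (a b : ℤ) : P1Q :=
  if h : a = 0 ∧ b = 0 then
    Projectivization.mk ℚ ![1, 0] (by
      intro hv
      have h0 := congrFun hv 0
      simp at h0)
  else
    Projectivization.mk ℚ ![(a : ℚ), (b : ℚ)] (by
      intro hv
      have h0 : (a : ℚ) = 0 := by simpa using congrFun hv 0
      have h1 : (b : ℚ) = 0 := by simpa using congrFun hv 1
      exact h ⟨by exact_mod_cast h0, by exact_mod_cast h1⟩)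

/-- Two points of `ℙ¹(ℚ)` are related if they are represented by primitive integer
vectors `(a,b)` and `(c,d)` with `|ad - bc| = 1`. -/
def fareyRel (x y : P1Q) : Prop :=
  ∃ a b c d : ℤ, Int.gcd a b = 1 ∧ Int.gcd c d = 1 ∧ |a * d - b * c| = 1 ∧
    x = fareyMk a b ∧ y = fareyMk c d

/-- The Farey graph on `ℙ¹(ℚ)`. -/
def fareyGraph : SimpleGraph P1Q := SimpleGraph.fromRel fareyRel

/-- The rational matrix associated to an element of `GL(2,ℤ)`. -/
def matQ (g : GL (Fin 2) ℤ) : Matrix (Fin 2) (Fin 2) ℚ :=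
  (g : Matrix (Fin 2) (Fin 2) ℤ).map ((↑) : ℤ → ℚ)

lemma matQ_mul (g h : GL (Fin 2) ℤ) : matQ (g * h) = matQ g * matQ h := by
  simpa [matQ] using
    (RingHom.mapMatrix (Int.castRingHom ℚ)).map_mul (g : Matrix (Fin 2) (Fin 2) ℤ) h

lemma matQ_one : matQ 1 = (1 : Matrix (Fin 2) (Fin 2) ℚ) := by
  simpa [matQ] using (RingHom.mapMatrix (Int.castRingHom ℚ)).map_one

lemma mulVecLin_matQ_injective (g : GL (Fin 2) ℤ) :
    Function.Injective ((matQ g).mulVecLin) := by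
  have key : ∀ v : Fin 2 → ℚ, (matQ g⁻¹).mulVecLin ((matQ g).mulVecLin v) = v := by
    intro v
    rw [Matrix.mulVecLin_apply, Matrix.mulVecLin_apply, Matrix.mulVec_mulVec,
      ← matQ_mul, inv_mul_cancel, matQ_one, Matrix.one_mulVec]
  exact Function.LeftInverse.injective key

/-- The action of `GL(2,ℤ)` on `ℙ¹(ℚ)` by linear action on representative vectors. -/
def fareyAct (g : GL (Fin 2) ℤ) (x : P1Q) : P1Q :=
  Projectivization.map ((matQ g).mulVecLin) (mulVecLin_matQ_injective g) x

/-- A map `φ` is simplicial on `Y ⊆ ℙ¹(ℚ)` with respect to the Farey graph. -/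
def FareySimplicial (Y : Set P1Q) (φ : P1Q → P1Q) : Prop :=
  ∀ y ∈ Y, ∀ z ∈ Y, fareyGraph.Adj y z → fareyGraph.Adj (φ y) (φ z)

/-- The closed star of `y` in `Y`: the set `{y} ∪ {z ∈ Y : z adjacent to y}`. -/
def fareyClosedStar (Y : Set P1Q) (y : P1Q) : Set P1Q :=
  {z ∈ Y | z = y ∨ fareyGraph.Adj y z}

/-- A map `φ` is locally injective on `Y ⊆ ℙ¹(ℚ)` with respect to the Farey graph. -/
def FareyLocallyInjective (Y : Set P1Q) (φ : P1Q → P1Q) : Prop :=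
  ∀ y ∈ Y, Set.InjOn φ (fareyClosedStar Y y)

/-- A triangle of the Farey graph: a set of three pairwise adjacent vertices. -/
def IsFareyTriangle (t : Set P1Q) : Prop :=
  t.ncard = 3 ∧ ∀ x ∈ t, ∀ y ∈ t, x ≠ y → fareyGraph.Adj x y

/-- The dual graph of the Farey graph: vertices are the triangles of the Farey graph,
two triangles being adjacent iff their intersection has exactly two elements. -/
def fareyDual : SimpleGraph {t : Set P1Q // IsFareyTriangle t} :=
  SimpleGraph.fromRel (fun t₁ t₂ => ((t₁ : Set P1Q) ∩ (t₂ : Set P1Q)).ncard = 2)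

/-!
Primitive integer vectors representing adjacent Farey vertices form a basis of `ℤ²`, so
`GL(2,ℤ)` is transitive on ordered Farey triangles, and the edge `[u], [v]` lies in exactly two
triangles, with third vertices `[u + v]` and `[u - v]`. Hence a simplicial map agrees with some
`g ∈ GL(2,ℤ)` on one triangle. If it agrees with `g` on a triangle, it agrees with `g` on each
neighbouring triangle: both send the new vertex to a common neighbour of the image of the shared
edge, and local injectivity rules out the one already used by the old triangle. Connectedness of
`D` in the dual graph propagates the agreement to all of `D`.
-/

lemma intVec_ne_zero {a b : ℤ} (h : ¬(a = 0 ∧ b = 0)) : ![(a : ℚ), b] ≠ 0 := by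
  intro hv
  exact h ⟨by simpa using congrFun hv 0, by simpa using congrFun hv 1⟩

lemma fareyMk_of_ne_zero {a b : ℤ} (h : ¬(a = 0 ∧ b = 0)) :
    fareyMk a b = Projectivization.mk ℚ ![(a : ℚ), b] (intVec_ne_zero h) := by
  rw [fareyMk, dif_neg h]

lemma IsCoprime.not_both_zero {R : Type*} [CommSemiring R] [Nontrivial R] {a b : R}
    (h : IsCoprime a b) : ¬(a = 0 ∧ b = 0) := by
  rintro ⟨rfl, rfl⟩
  exact not_isUnit_zero (isCoprime_zero_left.1 h)

lemma fareyMk_eq_fareyMk_iff {a b c d : ℤ} (hab : ¬(a = 0 ∧ b = 0))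
    (hcd : ¬(c = 0 ∧ d = 0)) :
    fareyMk a b = fareyMk c d ↔ a * d = b * c := by
  rw [fareyMk_of_ne_zero hab, fareyMk_of_ne_zero hcd, Projectivization.mk_eq_mk_iff']
  constructor
  · rintro ⟨k, hk⟩
    have ha : k * c = (a : ℚ) := by simpa using congrFun hk 0
    have hb : k * d = (b : ℚ) := by simpa using congrFun hk 1
    have : (a : ℚ) * d = b * c := by rw [← ha, ← hb]; ring
    exact_mod_cast this
  · intro h
    have hq : (a : ℚ) * d = b * c := by exact_mod_cast h
    by_cases hc : c = 0
    · have hd : (d : ℚ) ≠ 0 := by exact_mod_cast fun hd => hcd ⟨hc, hd⟩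
      refine ⟨b / d, funext fun i => ?_⟩
      fin_cases i
      · have : (a : ℚ) = 0 := by simpa [hc, hd] using hq
        simp [hc, this]
      · simp [hd]
    · have hc' : (c : ℚ) ≠ 0 := by exact_mod_cast hc
      refine ⟨a / c, funext fun i => ?_⟩
      fin_cases i
      · simp [hc']
      · simp only [Fin.mk_one, Pi.smul_apply, Matrix.cons_val_one, Matrix.cons_val_zero,
          smul_eq_mul]
        field_simp
        linarith

lemma fareyMk_neg (a b : ℤ) (h : ¬(a = 0 ∧ b = 0)) : fareyMk (-a) (-b) = fareyMk a b :=
  (fareyMk_eq_fareyMk_iff (by simpa using h) h).2 (by ring)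

lemma exists_isCoprime_fareyMk_eq (x : P1Q) : ∃ a b : ℤ, IsCoprime a b ∧ fareyMk a b = x := by
  induction x using Projectivization.ind with
  | h v hv =>
  by_cases hv1 : v 1 = 0
  · have hv0 : v 0 ≠ 0 := fun hv0 => hv (funext fun i => by fin_cases i <;> simp [hv0, hv1])
    refine ⟨1, 0, isCoprime_one_left, ?_⟩
    rw [fareyMk_of_ne_zero (by simp), Projectivization.mk_eq_mk_iff']
    exact ⟨(v 0)⁻¹, funext fun i => by fin_cases i <;> simp [hv0, hv1]⟩
  · set r := v 0 / v 1
    refine ⟨r.num, r.den, Int.isCoprime_iff_gcd_eq_one.2 r.reduced, ?_⟩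
    rw [fareyMk_of_ne_zero (by simp), Projectivization.mk_eq_mk_iff']
    have hr : (r.den : ℚ) * r = r.num := Rat.den_mul_eq_num r
    refine ⟨r.den / v 1, funext fun i => ?_⟩
    fin_cases i
    · simp only [Fin.zero_eta, Pi.smul_apply, Matrix.cons_val_zero, smul_eq_mul, ← hr, r]
      ring
    · simp [hv1]

lemma isCoprime_left_of_abs_det_eq_one {a b c d : ℤ} (h : |a * d - b * c| = 1) :
    IsCoprime a b := by
  rcases abs_eq zero_le_one |>.1 h with h | h
  · exact ⟨d, -c, by linear_combination h⟩
  · exact ⟨-d, c, by linear_combination -h⟩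

lemma isCoprime_right_of_abs_det_eq_one {a b c d : ℤ} (h : |a * d - b * c| = 1) :
    IsCoprime c d :=
  isCoprime_left_of_abs_det_eq_one (a := c) (c := a)
    (by rwa [abs_sub_comm, mul_comm c, mul_comm d])

lemma eq_or_eq_neg_of_fareyMk_eq {a b c d : ℤ} (hab : IsCoprime a b) (hcd : IsCoprime c d)
    (h : fareyMk a b = fareyMk c d) : (c = a ∧ d = b) ∨ (c = -a ∧ d = -b) := by
  have hx := (fareyMk_eq_fareyMk_iff hab.not_both_zero hcd.not_both_zero).1 h
  obtain ⟨s, t, hst⟩ := hab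
  -- Bezout: `(c, d) = k • (a, b)` with `k = s c + t d`, a unit since `(c, d)` is primitive
  set k := s * c + t * d
  have hc : c = k * a := by linear_combination (-c) * hst - t * hx
  have hd : d = k * b := by linear_combination (-d) * hst + s * hx
  obtain ⟨s', t', hst'⟩ := hcd
  have hk : k * (s' * a + t' * b) = 1 := by linear_combination hst' - s' * hc - t' * hd
  rcases Int.eq_one_or_neg_one_of_mul_eq_one hk with hk | hk <;> rw [hk] at hc hd
  · exact Or.inl ⟨by linarith, by linarith⟩
  · exact Or.inr ⟨by linarith, by linarith⟩

lemma fareyGraph_adj_of_abs_det {a b c d : ℤ} (h : |a * d - b * c| = 1) :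
    fareyGraph.Adj (fareyMk a b) (fareyMk c d) := by
  have hab := isCoprime_left_of_abs_det_eq_one h
  have hcd := isCoprime_right_of_abs_det_eq_one h
  refine SimpleGraph.fromRel_adj _ _ _ |>.2 ⟨fun he => ?_, Or.inl ?_⟩
  · rw [fareyMk_eq_fareyMk_iff hab.not_both_zero hcd.not_both_zero] at he
    simp [he] at h
  · exact ⟨a, b, c, d, Int.isCoprime_iff_gcd_eq_one.1 hab, Int.isCoprime_iff_gcd_eq_one.1 hcd,
      h, rfl, rfl⟩

lemma exists_abs_det_of_fareyGraph_adj {x y : P1Q} (h : fareyGraph.Adj x y) :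
    ∃ a b c d : ℤ, |a * d - b * c| = 1 ∧ fareyMk a b = x ∧ fareyMk c d = y := by
  rcases (SimpleGraph.fromRel_adj _ _ _).1 h |>.2 with
    ⟨a, b, c, d, -, -, hdet, rfl, rfl⟩ | ⟨a, b, c, d, -, -, hdet, rfl, rfl⟩
  · exact ⟨a, b, c, d, hdet, rfl, rfl⟩
  · exact ⟨c, d, a, b, by rwa [abs_sub_comm, mul_comm c, mul_comm d], rfl, rfl⟩

lemma fareyGraph_adj_fareyMk_iff {a b c d : ℤ} (hab : IsCoprime a b) (hcd : IsCoprime c d) :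
    fareyGraph.Adj (fareyMk a b) (fareyMk c d) ↔ |a * d - b * c| = 1 := by
  refine ⟨fun h => ?_, fareyGraph_adj_of_abs_det⟩
  obtain ⟨a', b', c', d', h', hx, hy⟩ := exists_abs_det_of_fareyGraph_adj h
  rcases eq_or_eq_neg_of_fareyMk_eq (isCoprime_left_of_abs_det_eq_one h') hab hx with
    ⟨rfl, rfl⟩ | ⟨rfl, rfl⟩ <;>
  rcases eq_or_eq_neg_of_fareyMk_eq (isCoprime_right_of_abs_det_eq_one h') hcd hy with
    ⟨rfl, rfl⟩ | ⟨rfl, rfl⟩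
  all_goals rw [← h', abs_eq_abs]; first | exact Or.inl (by ring1) | exact Or.inr (by ring1)

lemma eq_or_eq_of_adj_of_adj {a b c d : ℤ} (h : |a * d - b * c| = 1) {r : P1Q}
    (hr₁ : fareyGraph.Adj (fareyMk a b) r) (hr₂ : fareyGraph.Adj (fareyMk c d) r) :
    r = fareyMk (a + c) (b + d) ∨ r = fareyMk (a - c) (b - d) := by
  obtain ⟨p, q, hpq, rfl⟩ := exists_isCoprime_fareyMk_eq r
  have hm := (fareyGraph_adj_fareyMk_iff (isCoprime_left_of_abs_det_eq_one h) hpq).1 hr₁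
  have hn := (fareyGraph_adj_fareyMk_iff (isCoprime_right_of_abs_det_eq_one h) hpq).1 hr₂
  have hsum : IsCoprime (a + c) (b + d) :=
    isCoprime_left_of_abs_det_eq_one (c := c) (d := d) (by rw [← h]; ring_nf)
  have hdiff : IsCoprime (a - c) (b - d) :=
    isCoprime_left_of_abs_det_eq_one (c := c) (d := d) (by rw [← h]; ring_nf)
  rw [fareyMk_eq_fareyMk_iff hpq.not_both_zero hsum.not_both_zero,
    fareyMk_eq_fareyMk_iff hpq.not_both_zero hdiff.not_both_zero]
  -- the two cross products are `-(m + n)` and `n - m`, where `m, n = ±1` are the determinants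
  -- of `(p, q)` against `(a, b)` and `(c, d)`
  rcases abs_eq zero_le_one |>.1 hm with hm | hm <;>
  rcases abs_eq zero_le_one |>.1 hn with hn | hn
  · exact Or.inr (by linear_combination hn - hm)
  · exact Or.inl (by linear_combination -hn - hm)
  · exact Or.inl (by linear_combination -hn - hm)
  · exact Or.inr (by linear_combination hn - hm)

lemma matQ_mulVecLin_intVec (g : GL (Fin 2) ℤ) (p q : ℤ) :
    (matQ g).mulVecLin ![(p : ℚ), q] =
      ![((g.1 0 0 * p + g.1 0 1 * q : ℤ) : ℚ), ((g.1 1 0 * p + g.1 1 1 * q : ℤ) : ℚ)] := by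
  funext i
  fin_cases i <;> simp [matQ, Matrix.mulVec, dotProduct, Fin.sum_univ_two]

lemma fareyAct_fareyMk (g : GL (Fin 2) ℤ) {p q : ℤ} (h : ¬(p = 0 ∧ q = 0)) :
    fareyAct g (fareyMk p q) =
      fareyMk (g.1 0 0 * p + g.1 0 1 * q) (g.1 1 0 * p + g.1 1 1 * q) := by
  have h' : ¬(g.1 0 0 * p + g.1 0 1 * q = 0 ∧ g.1 1 0 * p + g.1 1 1 * q = 0) := by
    rintro ⟨h₀, h₁⟩
    refine intVec_ne_zero h (mulVecLin_matQ_injective g ?_)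
    rw [matQ_mulVecLin_intVec, h₀, h₁, map_zero]
    simp
  rw [fareyMk_of_ne_zero h, fareyMk_of_ne_zero h', fareyAct, Projectivization.map_mk]
  congr 1
  exact matQ_mulVecLin_intVec g p q

lemma fareyAct_mul (g h : GL (Fin 2) ℤ) (x : P1Q) :
    fareyAct (g * h) x = fareyAct g (fareyAct h x) := by
  induction x using Projectivization.ind with
  | h v hv =>
  simp only [fareyAct, Projectivization.map_mk, Matrix.mulVecLin_apply, matQ_mul,
    Matrix.mulVec_mulVec]

lemma fareyAct_one (x : P1Q) : fareyAct 1 x = x := by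
  induction x using Projectivization.ind with
  | h v hv =>
  simp only [fareyAct, Projectivization.map_mk, Matrix.mulVecLin_apply, matQ_one,
    Matrix.one_mulVec]

lemma fareyAct_injective (g : GL (Fin 2) ℤ) : Function.Injective (fareyAct g) :=
  Projectivization.map_injective _ (mulVecLin_matQ_injective g)

lemma fareyGraph_adj_fareyAct (g : GL (Fin 2) ℤ) {x y : P1Q} (h : fareyGraph.Adj x y) :
    fareyGraph.Adj (fareyAct g x) (fareyAct g y) := by
  obtain ⟨a, b, c, d, hdet, rfl, rfl⟩ := exists_abs_det_of_fareyGraph_adj h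
  rw [fareyAct_fareyMk g (isCoprime_left_of_abs_det_eq_one hdet).not_both_zero,
    fareyAct_fareyMk g (isCoprime_right_of_abs_det_eq_one hdet).not_both_zero]
  apply fareyGraph_adj_of_abs_det
  have hg : |g.1 0 0 * g.1 1 1 - g.1 0 1 * g.1 1 0| = 1 := by
    rw [← Matrix.det_fin_two, ← Int.isUnit_iff_abs_eq]
    exact (Matrix.isUnit_iff_isUnit_det _).1 g.isUnit
  calc _ = |(g.1 0 0 * g.1 1 1 - g.1 0 1 * g.1 1 0) * (a * d - b * c)| := by ring_nf
    _ = 1 := by rw [abs_mul, hg, hdet, one_mul]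

lemma exists_fareyAct_standard_triangle_eq_fareyMk {a b c d : ℤ} (h : |a * d - b * c| = 1) :
    ∃ g : GL (Fin 2) ℤ, fareyAct g (fareyMk 1 0) = fareyMk a b ∧
      fareyAct g (fareyMk 0 1) = fareyMk c d ∧
      fareyAct g (fareyMk 1 1) = fareyMk (a + c) (b + d) := by
  have hunit : IsUnit (!![a, c; b, d]).det := by
    rwa [Matrix.det_fin_two_of, mul_comm c, Int.isUnit_iff_abs_eq]
  refine ⟨Matrix.nonsingInvUnit _ hunit, ?_, ?_, ?_⟩ <;>
    rw [fareyAct_fareyMk _ (by norm_num)] <;> simp [Matrix.nonsingInvUnit, unitOfInvertible]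

lemma exists_fareyAct_standard_triangle_eq {x y z : P1Q} (hxy : fareyGraph.Adj x y)
    (hxz : fareyGraph.Adj x z) (hyz : fareyGraph.Adj y z) :
    ∃ g : GL (Fin 2) ℤ, fareyAct g (fareyMk 1 0) = x ∧ fareyAct g (fareyMk 0 1) = y ∧
      fareyAct g (fareyMk 1 1) = z := by
  obtain ⟨a, b, c, d, h, rfl, rfl⟩ := exists_abs_det_of_fareyGraph_adj hxy
  rcases eq_or_eq_of_adj_of_adj h hxz hyz with rfl | rfl
  · exact exists_fareyAct_standard_triangle_eq_fareyMk h
  · have h' : |a * -d - b * -c| = 1 := by rw [← h, ← abs_neg]; congr 1; ring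
    rw [← fareyMk_neg c d (isCoprime_right_of_abs_det_eq_one h).not_both_zero]
    simpa only [← sub_eq_add_neg] using exists_fareyAct_standard_triangle_eq_fareyMk h'

lemma SimpleGraph.Reachable.induction {V : Type*} {G : SimpleGraph V} {P : V → Prop}
    (hP : ∀ a b, G.Adj a b → P a → P b) {u v : V} (h : G.Reachable u v) (hu : P u) : P v := by
  replace h := (SimpleGraph.reachable_iff_reflTransGen u v).1 h
  induction h with
  | refl => exact hu
  | tail _ hab ih => exact hP _ _ hab ih

section Rigidity

variable {Y : Set P1Q} {φ : P1Q → P1Q}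

lemma exists_apply_eq_fareyAct_of_triangle (hφ : FareySimplicial Y φ) {x y z : P1Q}
    (hx : x ∈ Y) (hy : y ∈ Y) (hz : z ∈ Y) (hxy : fareyGraph.Adj x y)
    (hxz : fareyGraph.Adj x z) (hyz : fareyGraph.Adj y z) :
    ∃ g : GL (Fin 2) ℤ,
      φ x = fareyAct g x ∧ φ y = fareyAct g y ∧ φ z = fareyAct g z := by
  obtain ⟨g₀, rfl, rfl, rfl⟩ := exists_fareyAct_standard_triangle_eq hxy hxz hyz
  obtain ⟨g₁, h₁x, h₁y, h₁z⟩ :=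
    exists_fareyAct_standard_triangle_eq (hφ _ hx _ hy hxy) (hφ _ hx _ hz hxz)
      (hφ _ hy _ hz hyz)
  refine ⟨g₁ * g₀⁻¹, ?_, ?_, ?_⟩ <;>
    rw [← fareyAct_mul, inv_mul_cancel_right, eq_comm] <;> assumption

lemma apply_eq_fareyAct_of_flip (hφ : FareySimplicial Y φ)
    (hφ' : FareyLocallyInjective Y φ) (g : GL (Fin 2) ℤ) {u v w p : P1Q}
    (hu : u ∈ Y) (hv : v ∈ Y) (hw : w ∈ Y) (hp : p ∈ Y)
    (huv : fareyGraph.Adj u v) (huw : fareyGraph.Adj u w) (hvw : fareyGraph.Adj v w)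
    (hup : fareyGraph.Adj u p) (hvp : fareyGraph.Adj v p) (hpw : p ≠ w)
    (hgu : φ u = fareyAct g u) (hgv : φ v = fareyAct g v) (hgw : φ w = fareyAct g w) :
    φ p = fareyAct g p := by
  obtain ⟨a, b, c, d, h, hφu, hφv⟩ := exists_abs_det_of_fareyGraph_adj (hφ _ hu _ hv huv)
  -- `φ w`, `φ p` and `g p` are common neighbours of the edge `φ u, φ v`, which has only two
  have hφw := eq_or_eq_of_adj_of_adj h (hφu ▸ hφ _ hu _ hw huw) (hφv ▸ hφ _ hv _ hw hvw)
  have hφp := eq_or_eq_of_adj_of_adj h (hφu ▸ hφ _ hu _ hp hup) (hφv ▸ hφ _ hv _ hp hvp)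
  have hgp := eq_or_eq_of_adj_of_adj h (hφu ▸ hgu ▸ fareyGraph_adj_fareyAct g hup)
    (hφv ▸ hgv ▸ fareyGraph_adj_fareyAct g hvp)
  have hφpw : φ p ≠ φ w := fun he =>
    hpw (hφ' u hu ⟨hp, Or.inr hup⟩ ⟨hw, Or.inr huw⟩ he)
  have hgpw : fareyAct g p ≠ φ w := hgw ▸ (fareyAct_injective g).ne hpw
  rcases hφw with hw' | hw' <;> rcases hφp with hp' | hp' <;> rcases hgp with hg' | hg' <;>
    first
      | exact absurd (hp'.trans hw'.symm) hφpw
      | exact absurd (hg'.trans hw'.symm) hgpw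
      | exact hp'.trans hg'.symm

lemma exists_eqOn_fareyAct_of_isFareyTriangle (hφ : FareySimplicial Y φ) {t : Set P1Q}
    (ht : IsFareyTriangle t) (htY : t ⊆ Y) :
    ∃ g : GL (Fin 2) ℤ, Set.EqOn φ (fareyAct g) t := by
  obtain ⟨x, y, z, hxy, hxz, hyz, rfl⟩ := Set.ncard_eq_three.1 ht.1
  have hadj := ht.2
  obtain ⟨g, hgx, hgy, hgz⟩ := exists_apply_eq_fareyAct_of_triangle hφ (htY (by simp))
    (htY (by simp)) (htY (by simp)) (hadj _ (by simp) _ (by simp) hxy)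
    (hadj _ (by simp) _ (by simp) hxz) (hadj _ (by simp) _ (by simp) hyz)
  refine ⟨g, ?_⟩
  rintro _ (rfl | rfl | rfl) <;> assumption

lemma eqOn_fareyAct_of_fareyDual_adj (hφ : FareySimplicial Y φ)
    (hφ' : FareyLocallyInjective Y φ) (g : GL (Fin 2) ℤ)
    {t t' : {t : Set P1Q // IsFareyTriangle t}}
    (hadj : fareyDual.Adj t t') (htY : (t : Set P1Q) ⊆ Y) (ht'Y : (t' : Set P1Q) ⊆ Y)
    (hg : Set.EqOn φ (fareyAct g) t) : Set.EqOn φ (fareyAct g) t' := by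
  have hcard : ((t : Set P1Q) ∩ t').ncard = 2 := by
    rcases ((SimpleGraph.fromRel_adj _ _ _).1 hadj).2 with h | h
    · exact h
    · rwa [Set.inter_comm]
  obtain ⟨u, v, huv, htt'⟩ := Set.ncard_eq_two.1 hcard
  have hu : u ∈ (t : Set P1Q) ∩ t' := htt' ▸ Set.mem_insert u {v}
  have hv : v ∈ (t : Set P1Q) ∩ t' := htt' ▸ Set.mem_insert_of_mem u rfl
  obtain ⟨w, hwt, hw⟩ := Set.exists_mem_notMem_of_ncard_lt_ncard
    (s := (t : Set P1Q) ∩ t') (t := t) (by rw [hcard, t.2.1]; norm_num)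
    (Set.finite_of_ncard_ne_zero (by rw [hcard]; norm_num))
  have hwt' : w ∉ (t' : Set P1Q) := fun h => hw ⟨hwt, h⟩
  intro p hp
  by_cases hpt : p ∈ (t : Set P1Q)
  · exact hg hpt
  exact apply_eq_fareyAct_of_flip hφ hφ' g (htY hu.1) (htY hv.1) (htY hwt) (ht'Y hp)
    (t.2.2 _ hu.1 _ hv.1 huv) (t.2.2 _ hu.1 _ hwt (ne_of_mem_of_not_mem hu.2 hwt'))
    (t.2.2 _ hv.1 _ hwt (ne_of_mem_of_not_mem hv.2 hwt'))
    (t'.2.2 _ hu.2 _ hp (ne_of_mem_of_not_mem hu.1 hpt))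
    (t'.2.2 _ hv.2 _ hp (ne_of_mem_of_not_mem hv.1 hpt)) (ne_of_mem_of_not_mem hp hwt')
    (hg hu.1) (hg hv.1) (hg hwt)

end Rigidity

theorem farey_disk_rigid_general (D : Set {t : Set P1Q // IsFareyTriangle t})
    (hDconn : (fareyDual.induce D).Connected) :
    ∀ φ : P1Q → P1Q,
      FareySimplicial (⋃ t ∈ D, (t : Set P1Q)) φ →
      FareyLocallyInjective (⋃ t ∈ D, (t : Set P1Q)) φ →
      ∃ g : GL (Fin 2) ℤ, ∀ y ∈ ⋃ t ∈ D, (t : Set P1Q), φ y = fareyAct g y := by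
  intro φ hφ hφ'
  have hDY (t : D) : (t.1 : Set P1Q) ⊆ ⋃ t ∈ D, (t : Set P1Q) :=
    Set.subset_biUnion_of_mem (u := fun t : {t : Set P1Q // IsFareyTriangle t} => t.1) t.2
  obtain ⟨t₀⟩ := hDconn.nonempty
  obtain ⟨g, hg⟩ := exists_eqOn_fareyAct_of_isFareyTriangle hφ t₀.1.2 (hDY t₀)
  refine ⟨g, fun y hy => ?_⟩
  obtain ⟨t, ht, hyt⟩ := Set.mem_iUnion₂.1 hy
  refine SimpleGraph.Reachable.induction (G := fareyDual.induce D)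
    (P := fun s : D => Set.EqOn φ (fareyAct g) s.1)
    (fun s s' hss' => eqOn_fareyAct_of_fareyDual_adj hφ hφ' g hss' (hDY s) (hDY s'))
    (hDconn t₀ ⟨t, ht⟩) hg hyt

/-- if `D` is a finite nonempty set of Farey triangles inducing a connected
subgraph of the dual graph, then the union of the triangles in `D` is a rigid subset of
`ℙ¹(ℚ)`: every locally injective simplicial map from it to `ℙ¹(ℚ)` is induced by an
element of `GL(2,ℤ)`. -/
theorem farey_disk_rigid (D : Set {t : Set P1Q // IsFareyTriangle t})
    (hDfin : D.Finite) (hDne : D.Nonempty)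
    (hDconn : (fareyDual.induce D).Connected) :
    ∀ φ : P1Q → P1Q,
      FareySimplicial (⋃ t ∈ D, (t : Set P1Q)) φ →
      FareyLocallyInjective (⋃ t ∈ D, (t : Set P1Q)) φ →
      ∃ g : GL (Fin 2) ℤ, ∀ y ∈ ⋃ t ∈ D, (t : Set P1Q), φ y = fareyAct g y :=
  farey_disk_rigid_general D hDconn
end
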